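/- arXiv:2311.14056 — 2 statements merged into one kernel-verified Lean document; each statement's English description precedes it below -/
import Mathlib

section
/- For all real numbers b, all μ > 0, σ > 0, and all real α > 1, one has (Φ(b/(μσ)))^(α-1) · Φ((b-αμ)/(μσ)) ≤ (Φ((b-μ)/(μσ)))^α, where powers are real powers (well-defined since Φ is strictly positive). -/
/-
The function `log Φ` is concave: its derivative `φ / Φ` has derivative
`-φ (φ + x Φ) / Φ²`, and `φ(x) + x Φ(x) = (√(2π))⁻¹ ∫_{t ≤ x} (x - t) e^{-t²/2} dt ≥ 0`.
Since `(b - μ)/(μσ)` is the convex combination of `b/(μσ)` and `(b - αμ)/(μσ)` with weights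
`(α - 1)/α` and `1/α`, concavity gives
`Φ(b/(μσ))^((α-1)/α) Φ((b-αμ)/(μσ))^(1/α) ≤ Φ((b-μ)/(μσ))`; raise both sides to the power `α`.
-/

open MeasureTheory Real Filter

/-- The standard normal cumulative distribution function
`Φ(x) = (√(2π))⁻¹ ∫_{-∞}^x exp(-t²/2) dt`. -/
noncomputable def stdNormalCDF (x : ℝ) : ℝ :=
  (Real.sqrt (2 * Real.pi))⁻¹ * ∫ t in Set.Iic x, Real.exp (-t ^ 2 / 2)

/-- The standard normal density `φ(x) = (√(2π))⁻¹ exp(-x²/2)`. -/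
noncomputable def stdNormalPDF (x : ℝ) : ℝ :=
  (Real.sqrt (2 * Real.pi))⁻¹ * Real.exp (-x ^ 2 / 2)

open Set

theorem ConcaveOn.rpow_mul_rpow_le_of_log {E : Type*} [AddCommGroup E] [Module ℝ E]
    {s : Set E} {f : E → ℝ} (hf : ConcaveOn ℝ s fun x => log (f x))
    (hpos : ∀ x ∈ s, 0 < f x) {x y : E} (hx : x ∈ s) (hy : y ∈ s) {a b : ℝ}
    (ha : 0 ≤ a) (hb : 0 ≤ b) (hab : a + b = 1) :
    f x ^ a * f y ^ b ≤ f (a • x + b • y) := by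
  have hxy : a • x + b • y ∈ s := hf.1 hx hy ha hb hab
  rw [rpow_def_of_pos (hpos x hx), rpow_def_of_pos (hpos y hy), ← exp_add,
    ← exp_log (hpos _ hxy), exp_le_exp]
  have := hf.2 hx hy ha hb hab
  simp only [smul_eq_mul] at this
  linarith

theorem hasDerivAt_setIntegral_Iic {E : Type*} [NormedAddCommGroup E] [NormedSpace ℝ E]
    [CompleteSpace E] {f : ℝ → E} (hf : Integrable f) (hcont : Continuous f)
    (x : ℝ) : HasDerivAt (fun y => ∫ t in Iic y, f t) (f x) x := by
  have hsplit : (fun y => ∫ t in Iic y, f t) =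
      fun y => (∫ t in (0 : ℝ)..y, f t) + ∫ t in Iic 0, f t := by
    funext y
    rw [← intervalIntegral.integral_Iic_sub_Iic hf.integrableOn hf.integrableOn, sub_add_cancel]
  rw [hsplit]
  exact (intervalIntegral.integral_hasDerivAt_right hf.intervalIntegrable
    (hcont.stronglyMeasurableAtFilter _ _) hcont.continuousAt).add_const _

lemma integrable_exp_neg_sq_div_two : Integrable fun t : ℝ => exp (-t ^ 2 / 2) := by
  simpa [neg_div, div_eq_inv_mul] using integrable_exp_neg_mul_sq (b := 1 / 2) (by norm_num)

lemma integrable_neg_mul_exp_neg_sq_div_two : Integrable fun t : ℝ => -t * exp (-t ^ 2 / 2) := by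
  simpa [neg_div, div_eq_inv_mul] using
    (integrable_mul_exp_neg_mul_sq (b := 1 / 2) (by norm_num)).neg

lemma hasDerivAt_exp_neg_sq_div_two (x : ℝ) :
    HasDerivAt (fun t : ℝ => exp (-t ^ 2 / 2)) (-x * exp (-x ^ 2 / 2)) x := by
  have h : HasDerivAt (fun t : ℝ => -t ^ 2 / 2) (-x) x := by
    simpa using ((hasDerivAt_pow 2 x).neg.div_const 2).congr_deriv (by ring)
  simpa [mul_comm] using h.exp

lemma integral_Iic_neg_mul_exp_neg_sq_div_two (x : ℝ) :
    ∫ t in Iic x, -t * exp (-t ^ 2 / 2) = exp (-x ^ 2 / 2) := by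
  have hderiv : ∀ t ∈ Iic x, HasDerivAt (fun t : ℝ => exp (-t ^ 2 / 2))
      (-t * exp (-t ^ 2 / 2)) t := fun t _ => hasDerivAt_exp_neg_sq_div_two t
  have hint := integrable_neg_mul_exp_neg_sq_div_two.integrableOn (s := Iic x)
  have hbot := tendsto_zero_of_hasDerivAt_of_integrableOn_Iic hderiv hint
    integrable_exp_neg_sq_div_two.integrableOn
  simpa using integral_Iic_of_hasDerivAt_of_tendsto' hderiv hint hbot

lemma stdNormalPDF_pos (x : ℝ) : 0 < stdNormalPDF x := by
  unfold stdNormalPDF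
  positivity

lemma stdNormalCDF_pos (x : ℝ) : 0 < stdNormalCDF x := by
  unfold stdNormalCDF
  refine mul_pos (by positivity) ?_
  rw [setIntegral_pos_iff_support_of_nonneg_ae
    (.of_forall fun t => (exp_pos _).le) integrable_exp_neg_sq_div_two.integrableOn]
  simp [Function.support, exp_ne_zero]

lemma hasDerivAt_stdNormalCDF (x : ℝ) : HasDerivAt stdNormalCDF (stdNormalPDF x) x :=
  (hasDerivAt_setIntegral_Iic integrable_exp_neg_sq_div_two (by fun_prop) x).const_mul _

lemma hasDerivAt_stdNormalPDF (x : ℝ) : HasDerivAt stdNormalPDF (-x * stdNormalPDF x) x := by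
  have h : HasDerivAt stdNormalPDF ((sqrt (2 * π))⁻¹ * (-x * exp (-x ^ 2 / 2))) x :=
    (hasDerivAt_exp_neg_sq_div_two x).const_mul _
  exact h.congr_deriv (by unfold stdNormalPDF; ring)

lemma stdNormalPDF_add_mul_stdNormalCDF (x : ℝ) :
    stdNormalPDF x + x * stdNormalCDF x =
      (sqrt (2 * π))⁻¹ * ∫ t in Iic x, (x - t) * exp (-t ^ 2 / 2) := by
  have hsplit : ∫ t in Iic x, (x - t) * exp (-t ^ 2 / 2) =
      x * (∫ t in Iic x, exp (-t ^ 2 / 2)) + ∫ t in Iic x, -t * exp (-t ^ 2 / 2) := by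
    rw [← integral_const_mul, ← integral_add]
    · congr 1 with t
      ring
    · exact (integrable_exp_neg_sq_div_two.const_mul x).integrableOn
    · exact integrable_neg_mul_exp_neg_sq_div_two.integrableOn
  rw [hsplit, integral_Iic_neg_mul_exp_neg_sq_div_two, stdNormalPDF, stdNormalCDF]
  ring

lemma stdNormalPDF_add_mul_stdNormalCDF_nonneg (x : ℝ) :
    0 ≤ stdNormalPDF x + x * stdNormalCDF x := by
  rw [stdNormalPDF_add_mul_stdNormalCDF]
  refine mul_nonneg (by positivity) (setIntegral_nonneg measurableSet_Iic fun t ht => ?_)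
  exact mul_nonneg (sub_nonneg.2 ht) (exp_pos _).le

lemma concaveOn_log_stdNormalCDF : ConcaveOn ℝ univ fun x => log (stdNormalCDF x) := by
  have hlog (x : ℝ) : HasDerivAt (fun y => log (stdNormalCDF y))
      (stdNormalPDF x / stdNormalCDF x) x :=
    (hasDerivAt_stdNormalCDF x).log (stdNormalCDF_pos x).ne'
  have hratio (x : ℝ) : HasDerivAt (fun y => stdNormalPDF y / stdNormalCDF y)
      (-(stdNormalPDF x * (stdNormalPDF x + x * stdNormalCDF x)) / stdNormalCDF x ^ 2) x :=
    ((hasDerivAt_stdNormalPDF x).div (hasDerivAt_stdNormalCDF x)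
      (stdNormalCDF_pos x).ne').congr_deriv (by ring)
  refine Antitone.concaveOn_univ_of_deriv (fun x => (hlog x).differentiableAt) ?_
  rw [show deriv (fun y => log (stdNormalCDF y)) = _ from funext fun x => (hlog x).deriv]
  refine antitone_of_deriv_nonpos (fun x => (hratio x).differentiableAt) fun x => ?_
  rw [(hratio x).deriv]
  have := mul_nonneg (stdNormalPDF_pos x).le (stdNormalPDF_add_mul_stdNormalCDF_nonneg x)
  exact div_nonpos_of_nonpos_of_nonneg (neg_nonpos.2 this) (sq_nonneg _)

theorem cdf_inequality_second_general (b μ σ α : ℝ) (hα : 1 < α) :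
    stdNormalCDF (b / (μ * σ)) ^ (α - 1) *
      stdNormalCDF ((b - α * μ) / (μ * σ)) ≤
    stdNormalCDF ((b - μ) / (μ * σ)) ^ α := by
  have hα₀ : 0 < α := by linarith
  have hcomb : ((α - 1) / α) • (b / (μ * σ)) + (1 / α) • ((b - α * μ) / (μ * σ)) =
      (b - μ) / (μ * σ) := by
    simp only [smul_eq_mul, div_eq_mul_inv]
    field_simp
    ring
  have hgeom := concaveOn_log_stdNormalCDF.rpow_mul_rpow_le_of_log (a := (α - 1) / α)
    (b := 1 / α) (fun x _ => stdNormalCDF_pos x) (mem_univ (b / (μ * σ)))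
    (mem_univ ((b - α * μ) / (μ * σ))) (div_nonneg (by linarith) hα₀.le)
    (by positivity) (by field_simp; ring)
  rw [hcomb] at hgeom
  set X := b / (μ * σ)
  set Y := (b - α * μ) / (μ * σ)
  have hΦ (x : ℝ) (p : ℝ) : 0 ≤ stdNormalCDF x ^ p := rpow_nonneg (stdNormalCDF_pos x).le p
  calc stdNormalCDF X ^ (α - 1) * stdNormalCDF Y
      = (stdNormalCDF X ^ ((α - 1) / α) * stdNormalCDF Y ^ (1 / α)) ^ α := by
        rw [mul_rpow (hΦ _ _) (hΦ _ _),
          ← rpow_mul (stdNormalCDF_pos _).le, ← rpow_mul (stdNormalCDF_pos _).le,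
          div_mul_cancel₀ _ hα₀.ne', one_div_mul_cancel hα₀.ne', rpow_one]
    _ ≤ stdNormalCDF ((b - μ) / (μ * σ)) ^ α :=
        rpow_le_rpow (mul_nonneg (hΦ _ _) (hΦ _ _)) hgeom hα₀.le

/-- Second inequality of Theorem 4.2:
`Φ(b/(μσ))^(α-1) · Φ((b-αμ)/(μσ)) ≤ Φ((b-μ)/(μσ))^α` (real powers). -/
theorem cdf_inequality_second (b μ σ α : ℝ) (hμ : 0 < μ) (hσ : 0 < σ) (hα : 1 < α) :
    stdNormalCDF (b / (μ * σ)) ^ (α - 1) *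
      stdNormalCDF ((b - α * μ) / (μ * σ)) ≤
    stdNormalCDF ((b - μ) / (μ * σ)) ^ α :=
  cdf_inequality_second_general b μ σ α hα
end

section
/- Let μ > 0, σ > 0, α > 1, and a < b be real numbers. Define the truncated normal densities p(x) = (1/(μσ√(2π))) · exp(-x²/(2μ²σ²)) / (Φ(b/(μσ)) - Φ(a/(μσ))) and q(x) = (1/(μσ√(2π))) · exp(-(x-μ)²/(2μ²σ²)) / (Φ((b-μ)/(μσ)) - Φ((a-μ)/(μσ))) for x ∈ [a,b]. Then (1/(α-1)) · ln(∫_a^b p(x)^α · q(x)^(1-α) dx) = α/(2σ²) + (1/(α-1)) · ln[ (Φ((b-μ)/(μσ)) - Φ((a-μ)/(μσ)))^(α-1) / (Φ(b/(μσ)) - Φ(a/(μσ)))^α · (Φ((b-(1-α)μ)/(μσ)) - Φ((a-(1-α)μ)/(μσ))) ]. -/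
open MeasureTheory Real Filter

lemma gauss_integrable : MeasureTheory.Integrable (fun t : ℝ => Real.exp (-t ^ 2 / 2)) := by
  have h : (fun t : ℝ => Real.exp (-t ^ 2 / 2)) = fun t : ℝ => Real.exp (-(1/2) * t ^ 2) := by
    funext t; ring_nf
  rw [h]
  exact integrable_exp_neg_mul_sq (by norm_num)

lemma cdf_sub (x y : ℝ) :
    stdNormalCDF y - stdNormalCDF x
      = (Real.sqrt (2 * Real.pi))⁻¹ * ∫ t in x..y, Real.exp (-t ^ 2 / 2) := by
  unfold stdNormalCDF
  rw [← mul_sub, intervalIntegral.integral_Iic_sub_Iic gauss_integrable.integrableOn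
    gauss_integrable.integrableOn]

lemma cdf_sub_pos {x y : ℝ} (h : x < y) : 0 < stdNormalCDF y - stdNormalCDF x := by
  rw [cdf_sub]
  have h2π : (0:ℝ) < 2 * Real.pi := by positivity
  refine mul_pos (inv_pos.2 (Real.sqrt_pos.2 h2π)) ?_
  exact intervalIntegral.intervalIntegral_pos_of_pos
    gauss_integrable.intervalIntegrable (fun t => Real.exp_pos _) h

lemma gauss_interval (μ σ c a b : ℝ) (hμ : 0 < μ) (hσ : 0 < σ) :
    (∫ x in a..b, (1 / (μ * σ * Real.sqrt (2 * Real.pi))) *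
        Real.exp (-(x - c) ^ 2 / (2 * μ ^ 2 * σ ^ 2)))
      = stdNormalCDF ((b - c) / (μ * σ)) - stdNormalCDF ((a - c) / (μ * σ)) := by
  set m := μ * σ with hm_def
  have hm : 0 < m := mul_pos hμ hσ
  have hm' : m ≠ 0 := ne_of_gt hm
  have hsqrt : (0:ℝ) < Real.sqrt (2 * Real.pi) := Real.sqrt_pos.2 (by positivity)
  have hμ' : μ ≠ 0 := ne_of_gt hμ
  have hσ' : σ ≠ 0 := ne_of_gt hσ
  have h1 : ∀ x : ℝ, Real.exp (-(x - c) ^ 2 / (2 * μ ^ 2 * σ ^ 2))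
      = Real.exp (-((x - c) / m) ^ 2 / 2) := by
    intro x
    have : -(x - c) ^ 2 / (2 * μ ^ 2 * σ ^ 2) = -((x - c) / m) ^ 2 / 2 := by
      rw [hm_def]
      ring
    rw [this]
  rw [cdf_sub]
  have h2 : (∫ x in a..b, (1 / (μ * σ * Real.sqrt (2 * Real.pi))) *
        Real.exp (-(x - c) ^ 2 / (2 * μ ^ 2 * σ ^ 2)))
      = (1 / (m * Real.sqrt (2 * Real.pi))) *
        ∫ x in a..b, Real.exp (-((x - c) / m) ^ 2 / 2) := by
    rw [intervalIntegral.integral_const_mul]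
    congr 1
    apply intervalIntegral.integral_congr
    intro x _
    exact h1 x
  rw [h2]
  have h3 : (∫ x in a..b, Real.exp (-((x - c) / m) ^ 2 / 2))
      = m * ∫ t in (a - c)/m..(b - c)/m, Real.exp (-t ^ 2 / 2) := by
    rw [intervalIntegral.integral_comp_sub_right (fun y => Real.exp (-(y / m) ^ 2 / 2)) c]
    rw [intervalIntegral.integral_comp_div (f := fun t => Real.exp (-t ^ 2 / 2)) hm']
    rw [smul_eq_mul]
  rw [h3]
  field_simp

/-- Closed-form order-α Rényi divergence between two truncated normals on `[a,b]`
(`N(0,μ²σ²)` against `N(μ,μ²σ²)`), from the proof of Theorem 4.1. -/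
theorem renyi_truncated_normal_interval (μ σ α a b : ℝ)
    (hμ : 0 < μ) (hσ : 0 < σ) (hα : 1 < α) (hab : a < b) :
    (1 / (α - 1)) * Real.log (∫ x in a..b,
        ((1 / (μ * σ * Real.sqrt (2 * Real.pi))) *
            Real.exp (-x ^ 2 / (2 * μ ^ 2 * σ ^ 2)) /
            (stdNormalCDF (b / (μ * σ)) - stdNormalCDF (a / (μ * σ)))) ^ α *
        ((1 / (μ * σ * Real.sqrt (2 * Real.pi))) *
            Real.exp (-(x - μ) ^ 2 / (2 * μ ^ 2 * σ ^ 2)) /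
            (stdNormalCDF ((b - μ) / (μ * σ)) -
              stdNormalCDF ((a - μ) / (μ * σ)))) ^ (1 - α)) =
      α / (2 * σ ^ 2) + (1 / (α - 1)) * Real.log (
        (stdNormalCDF ((b - μ) / (μ * σ)) - stdNormalCDF ((a - μ) / (μ * σ))) ^ (α - 1) /
          (stdNormalCDF (b / (μ * σ)) - stdNormalCDF (a / (μ * σ))) ^ α *
          (stdNormalCDF ((b - (1 - α) * μ) / (μ * σ)) -
            stdNormalCDF ((a - (1 - α) * μ) / (μ * σ)))) := by
  have hm : (0:ℝ) < μ * σ := mul_pos hμ hσ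
  have hm' : μ * σ ≠ 0 := ne_of_gt hm
  have hμ' : μ ≠ 0 := ne_of_gt hμ
  have hσ' : σ ≠ 0 := ne_of_gt hσ
  have hα1 : α - 1 ≠ 0 := sub_ne_zero.2 (ne_of_gt hα)
  have hsqrt : (0:ℝ) < Real.sqrt (2 * Real.pi) := Real.sqrt_pos.2 (by positivity)
  set K : ℝ := 1 / (μ * σ * Real.sqrt (2 * Real.pi)) with hK_def
  have hK : 0 < K := by rw [hK_def]; positivity
  set Z0 : ℝ := stdNormalCDF (b / (μ * σ)) - stdNormalCDF (a / (μ * σ)) with hZ0_def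
  set Z1 : ℝ := stdNormalCDF ((b - μ) / (μ * σ)) - stdNormalCDF ((a - μ) / (μ * σ)) with hZ1_def
  set Zc : ℝ := stdNormalCDF ((b - (1 - α) * μ) / (μ * σ))
      - stdNormalCDF ((a - (1 - α) * μ) / (μ * σ)) with hZc_def
  have hZ0 : 0 < Z0 := cdf_sub_pos (by apply div_lt_div_of_pos_right hab hm)
  have hZ1 : 0 < Z1 := cdf_sub_pos
    (by apply div_lt_div_of_pos_right (by linarith) hm)
  have hZc : 0 < Zc := cdf_sub_pos
    (by apply div_lt_div_of_pos_right (by linarith) hm)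
  set E : ℝ := Real.exp (α * (α - 1) / (2 * σ ^ 2)) with hE_def
  have hE : 0 < E := Real.exp_pos _
  -- pointwise identity
  have hpt : ∀ x : ℝ,
      (K * Real.exp (-x ^ 2 / (2 * μ ^ 2 * σ ^ 2)) / Z0) ^ α *
        (K * Real.exp (-(x - μ) ^ 2 / (2 * μ ^ 2 * σ ^ 2)) / Z1) ^ (1 - α)
      = (E * (Z1 ^ (α - 1) / Z0 ^ α)) *
          (K * Real.exp (-(x - (1 - α) * μ) ^ 2 / (2 * μ ^ 2 * σ ^ 2))) := by
    intro x
    rw [Real.div_rpow (by positivity) hZ0.le, Real.div_rpow (by positivity) hZ1.le,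
      Real.mul_rpow hK.le (Real.exp_pos _).le, Real.mul_rpow hK.le (Real.exp_pos _).le,
      ← Real.exp_mul, ← Real.exp_mul]
    have hexp : -x ^ 2 / (2 * μ ^ 2 * σ ^ 2) * α
        + -(x - μ) ^ 2 / (2 * μ ^ 2 * σ ^ 2) * (1 - α)
        = α * (α - 1) / (2 * σ ^ 2)
          + -(x - (1 - α) * μ) ^ 2 / (2 * μ ^ 2 * σ ^ 2) := by
      field_simp
      ring
    have hKsum : K ^ α * K ^ (1 - α) = K := by
      rw [← Real.rpow_add hK]
      norm_num
    have hZ1inv : (Z1 ^ (1 - α))⁻¹ = Z1 ^ (α - 1) := by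
      rw [← Real.rpow_neg hZ1.le]
      norm_num
    set P : ℝ := Real.exp (-x ^ 2 / (2 * μ ^ 2 * σ ^ 2) * α) with hP_def
    set Q : ℝ := Real.exp (-(x - μ) ^ 2 / (2 * μ ^ 2 * σ ^ 2) * (1 - α)) with hQ_def
    set R : ℝ := Real.exp (-(x - (1 - α) * μ) ^ 2 / (2 * μ ^ 2 * σ ^ 2)) with hR_def
    have hexpmul : P * Q = E * R := by
      rw [hP_def, hQ_def, hR_def, hE_def, ← Real.exp_add, hexp, Real.exp_add]
    have key : K ^ α * P * (K ^ (1 - α) * Q) = K * (E * R) := by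
      calc K ^ α * P * (K ^ (1 - α) * Q) = (K ^ α * K ^ (1 - α)) * (P * Q) := by ring
        _ = K * (E * R) := by rw [hKsum, hexpmul]
    rw [div_eq_mul_inv (K ^ (1 - α) * Q) (Z1 ^ (1 - α)), hZ1inv]
    calc K ^ α * P / Z0 ^ α * (K ^ (1 - α) * Q * Z1 ^ (α - 1))
        = (K ^ α * P * (K ^ (1 - α) * Q)) * Z1 ^ (α - 1) / Z0 ^ α := by ring
      _ = K * (E * R) * Z1 ^ (α - 1) / Z0 ^ α := by rw [key]
      _ = E * (Z1 ^ (α - 1) / Z0 ^ α) * (K * R) := by ring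
  -- integral value
  have hint : (∫ x in a..b,
      (K * Real.exp (-x ^ 2 / (2 * μ ^ 2 * σ ^ 2)) / Z0) ^ α *
        (K * Real.exp (-(x - μ) ^ 2 / (2 * μ ^ 2 * σ ^ 2)) / Z1) ^ (1 - α))
      = E * (Z1 ^ (α - 1) / Z0 ^ α) * Zc := by
    rw [intervalIntegral.integral_congr (g := fun x => (E * (Z1 ^ (α - 1) / Z0 ^ α)) *
        (K * Real.exp (-(x - (1 - α) * μ) ^ 2 / (2 * μ ^ 2 * σ ^ 2))))
        (fun x _ => hpt x)]
    rw [intervalIntegral.integral_const_mul, hK_def,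
      gauss_interval μ σ ((1 - α) * μ) a b hμ hσ]
  rw [hint, Real.log_mul (by positivity) (ne_of_gt hZc),
    Real.log_mul (ne_of_gt hE) (by positivity), hE_def, Real.log_exp,
    Real.log_mul (by positivity) (ne_of_gt hZc)]
  have hfinal : (1 / (α - 1)) * (α * (α - 1) / (2 * σ ^ 2)) = α / (2 * σ ^ 2) := by
    field_simp
  rw [mul_add, mul_add, hfinal]
  ring
end
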